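/- Let S ⊆ X be a non-empty generalised nice set and J ⊆ I. Then S ∪ {{0,0}} ∪ {{0,j} : j ∈ J} is a generalised nice set if and only if for every {a,b} ∈ S, the line ℓ_{ab} = {a,b,a*b} satisfies either ℓ_{ab} ∩ J = ∅ or ℓ_{ab} ⊆ J. -/
import Mathlib


/-- The seven lines of the Fano plane. -/
def fanoLines : List (List ℕ) := [[1,2,5],[5,6,7],[7,4,1],[1,3,6],[6,4,2],[2,7,3],[3,4,5]]

/-- The Fano operation `*` extended to `I₀ = {0,…,7}`: `0*i = i*0 = i`, `i*i = 0`,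
and for distinct `i, j ∈ I` it is the third point on the line through `i` and `j`. -/
def fstar (i j : ℕ) : ℕ :=
  if i = j then 0
  else if i = 0 then j
  else if j = 0 then i
  else
    match fanoLines.find? (fun l => l.contains i && l.contains j) with
    | some l => (l.filter (fun x => x != i && x != j)).headD 0
    | none => 0

/-- The points of the Fano plane. -/
def I : Set ℕ := {1,2,3,4,5,6,7}

/-- The extended point set `I₀ = I ∪ {0}`. -/
def I0 : Set ℕ := {0,1,2,3,4,5,6,7}

/-- `X₀`: unordered pairs from `I₀` (repetitions allowed). -/
def X0 : Set (Sym2 ℕ) := {z | ∃ i ∈ I0, ∃ j ∈ I0, z = s(i,j)}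

/-- `X`: unordered pairs of two distinct points of `I`. -/
def X : Set (Sym2 ℕ) := {z | ∃ i ∈ I, ∃ j ∈ I, i ≠ j ∧ z = s(i,j)}

/-- `X_F = {{0,i} : i ∈ I₀}`. -/
def XF : Set (Sym2 ℕ) := {z | ∃ i ∈ I0, z = s(0,i)}

/-- `P_{a,b,c}`. -/
def P (a b c : ℕ) : Set (Sym2 ℕ) :=
  {s(a,b), s(b,c), s(c,a), s(a, fstar b c), s(b, fstar c a), s(c, fstar a b)}

/-- A generalised nice set: a subset of `X₀` such that `{a,b},{a*b,c} ∈ T` implies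
`P_{a,b,c} ⊆ T` for all `a, b, c ∈ I₀`. -/
def IsGNS (T : Set (Sym2 ℕ)) : Prop :=
  T ⊆ X0 ∧ ∀ a ∈ I0, ∀ b ∈ I0, ∀ c ∈ I0,
    s(a,b) ∈ T → s(fstar a b, c) ∈ T → P a b c ⊆ T

/-- A nice set: a subset of `X` such that for all generative `i, j, k ∈ I`,
`{i,j},{i*j,k} ∈ T` implies `P_{i,j,k} ⊆ T`. -/
def IsNice (T : Set (Sym2 ℕ)) : Prop :=
  T ⊆ X ∧ ∀ i ∈ I, ∀ j ∈ I, ∀ k ∈ I, i ≠ j → i ≠ k → j ≠ k → k ≠ fstar i j →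
    s(i,j) ∈ T → s(fstar i j, k) ∈ T → P i j k ⊆ T

/-- The smallest generalised nice set containing `S`. -/
def gnsClosure (S : Set (Sym2 ℕ)) : Set (Sym2 ℕ) := ⋂₀ {T | IsGNS T ∧ S ⊆ T}

/-- A collineation of the Fano plane, realised as a permutation of `ℕ` fixing the
complement of `I` and preserving collinearity. -/
def IsColl (σ : Equiv.Perm ℕ) : Prop :=
  (∀ n, n ∉ I → σ n = n) ∧
  ∀ i ∈ I, ∀ j ∈ I, i ≠ j → σ (fstar i j) = fstar (σ i) (σ j)
lemma fstar_zero_left (n : ℕ) : fstar 0 n = n := by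
  unfold fstar
  rcases eq_or_ne (0:ℕ) n with h | h
  · simp [← h]
  · simp [h]

lemma fstar_zero_right (n : ℕ) : fstar n 0 = n := by
  unfold fstar
  rcases eq_or_ne n 0 with rfl | h
  · simp
  · simp [h]

lemma fstar_facts : ∀ a ∈ Finset.Icc (1:ℕ) 7, ∀ b ∈ Finset.Icc (1:ℕ) 7, a ≠ b →
    fstar a b ∈ Finset.Icc (1:ℕ) 7 ∧ fstar a b ≠ a ∧ fstar a b ≠ b ∧ fstar a b = fstar b a := by
  decide

lemma mem_I_iff (a : ℕ) : a ∈ I ↔ a ∈ Finset.Icc 1 7 := by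
  simp [I, Finset.mem_Icc]; omega

lemma I_sub_I0 : I ⊆ I0 := by
  intro x hx; simp [I] at hx; simp [I0]; omega

lemma zero_mem_I0 : (0:ℕ) ∈ I0 := by simp [I0]

theorem gns_union_zeros_iff (S : Set (Sym2 ℕ)) (hSX : S ⊆ X) (hS : IsGNS S)
    (hne : S.Nonempty) (J : Set ℕ) (hJ : J ⊆ I) :
    IsGNS (S ∪ {s(0,0)} ∪ {z | ∃ j ∈ J, z = s(0,j)}) ↔
      ∀ a b : ℕ, s(a,b) ∈ S →
        (({a, b, fstar a b} : Set ℕ) ∩ J = ∅ ∨ ({a, b, fstar a b} : Set ℕ) ⊆ J) := by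
  set T := S ∪ {s(0,0)} ∪ {z | ∃ j ∈ J, z = s(0,j)} with hTdef
  have hST : S ⊆ T := fun z hz => Set.mem_union_left _ (Set.mem_union_left _ hz)
  have h00 : s(0,0) ∈ T := Set.mem_union_left _ (Set.mem_union_right _ rfl)
  have hJT : ∀ j ∈ J, s(0,j) ∈ T := fun j hj => Set.mem_union_right _ ⟨j, hj, rfl⟩
  have hSel : ∀ {a b : ℕ}, s(a,b) ∈ S → a ∈ I ∧ b ∈ I ∧ a ≠ b := by
    intro a b h
    obtain ⟨i, hi, j, hj, hij, hz⟩ := hSX h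
    rw [Sym2.eq_iff] at hz
    rcases hz with ⟨rfl, rfl⟩ | ⟨rfl, rfl⟩
    · exact ⟨hi, hj, hij⟩
    · exact ⟨hj, hi, hij.symm⟩
  have hTel : ∀ {k : ℕ}, k ≠ 0 → s(0,k) ∈ T → k ∈ J := by
    intro k hk h
    rcases h with (h | h) | h
    · obtain ⟨hi, _, _⟩ := hSel h
      rw [mem_I_iff] at hi
      simp at hi
    · rw [Set.mem_singleton_iff, Sym2.eq_iff] at h
      rcases h with ⟨_, h⟩ | ⟨_, h⟩ <;> exact absurd h hk
    · obtain ⟨j, hj, hz⟩ := h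
      rw [Sym2.eq_iff] at hz
      rcases hz with ⟨_, rfl⟩ | ⟨rfl, rfl⟩
      · exact hj
      · exact absurd rfl hk
  constructor
  · -- forward
    intro hT a b hab
    obtain ⟨ha, hb, hne'⟩ := hSel hab
    rw [mem_I_iff] at ha hb
    obtain ⟨hfmem, hfa, hfb, hfcomm⟩ := fstar_facts a ha b hb hne'
    have ha0 : a ≠ 0 := by rw [Finset.mem_Icc] at ha; omega
    have hb0 : b ≠ 0 := by rw [Finset.mem_Icc] at hb; omega
    have hf0 : fstar a b ≠ 0 := by rw [Finset.mem_Icc] at hfmem; omega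
    have haI0 : a ∈ I0 := I_sub_I0 ((mem_I_iff a).2 ha)
    have hbI0 : b ∈ I0 := I_sub_I0 ((mem_I_iff b).2 hb)
    by_cases hJint : ({a, b, fstar a b} : Set ℕ) ∩ J = ∅
    · exact Or.inl hJint
    right
    obtain ⟨x, hxline, hxJ⟩ := Set.nonempty_iff_ne_empty.2 hJint
    have key : a ∈ J ∧ b ∈ J ∧ fstar a b ∈ J := by
      rcases hxline with hx | hx | hx <;> rw [hx] at hxJ
      · -- x = a
        have hP := hT.2 0 zero_mem_I0 a haI0 b hbI0 (hJT a hxJ)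
          (by rw [fstar_zero_left]; exact hST hab)
        have h1 : s(b,0) ∈ P 0 a b := by simp [P]
        have h2 : s(0, fstar a b) ∈ P 0 a b := by simp [P]
        have hbJ : b ∈ J := hTel hb0 (by rw [Sym2.eq_swap]; exact hP h1)
        exact ⟨hxJ, hbJ, hTel hf0 (hP h2)⟩
      · -- x = b
        have hP := hT.2 0 zero_mem_I0 b hbI0 a haI0 (hJT b hxJ)
          (by rw [fstar_zero_left, Sym2.eq_swap]; exact hST hab)
        have h1 : s(a,0) ∈ P 0 b a := by simp [P]
        have h2 : s(0, fstar b a) ∈ P 0 b a := by simp [P]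
        have haJ : a ∈ J := hTel ha0 (by rw [Sym2.eq_swap]; exact hP h1)
        refine ⟨haJ, hxJ, ?_⟩
        rw [hfcomm]
        exact hTel (hfcomm ▸ hf0) (hP h2)
      · -- x = fstar a b
        have hP := hT.2 a haI0 b hbI0 0 zero_mem_I0 (hST hab)
          (by rw [Sym2.eq_swap]; exact hJT _ hxJ)
        have h1 : s(b,0) ∈ P a b 0 := by simp [P]
        have h2 : s(0,a) ∈ P a b 0 := by simp [P]
        exact ⟨hTel ha0 (hP h2), hTel hb0 (by rw [Sym2.eq_swap]; exact hP h1), hxJ⟩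
    intro y hy
    rcases hy with rfl | rfl | rfl
    · exact key.1
    · exact key.2.1
    · exact key.2.2
  · -- backward
    intro hline
    have hB : ∀ j ∈ J, ∀ c ∈ I0, s(j,c) ∈ T →
        s(0,j) ∈ T ∧ s(j,c) ∈ T ∧ s(0,c) ∈ T ∧ s(0, fstar j c) ∈ T ∧ fstar c j = fstar j c := by
      intro j hjJ c _ hjc
      have hjI := hJ hjJ
      rw [mem_I_iff] at hjI
      have hj0 : j ≠ 0 := by rw [Finset.mem_Icc] at hjI; omega
      rcases hjc with (hjcS | hjc00) | ⟨k, hkJ, hjck⟩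
      · obtain ⟨_, hcI, hjc'⟩ := hSel hjcS
        rw [mem_I_iff] at hcI
        obtain ⟨hfmem, _, _, hfcomm⟩ := fstar_facts j hjI c hcI hjc'
        rcases hline j c hjcS with hempty | hsub
        · exfalso
          have : j ∈ ({j, c, fstar j c} : Set ℕ) ∩ J := ⟨by simp, hjJ⟩
          rw [hempty] at this
          exact this
        · have hcJ : c ∈ J := hsub (by simp)
          have hfJ : fstar j c ∈ J := hsub (by simp)
          exact ⟨hJT j hjJ, hST hjcS, hJT c hcJ, hJT _ hfJ, hfcomm.symm⟩
      · rw [Set.mem_singleton_iff, Sym2.eq_iff] at hjc00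
        rcases hjc00 with ⟨h, _⟩ | ⟨h, _⟩ <;> exact absurd h hj0
      · rw [Sym2.eq_iff] at hjck
        rcases hjck with ⟨h, _⟩ | ⟨rfl, rfl⟩
        · exact absurd h hj0
        · refine ⟨hJT j hjJ, by rw [Sym2.eq_swap]; exact hJT j hjJ, h00, ?_, ?_⟩
          · rw [fstar_zero_right]; exact hJT j hjJ
          · rw [fstar_zero_left, fstar_zero_right]
    constructor
    · rintro z ((hz | hz) | hz)
      · obtain ⟨i, hi, j, hj, _, hzz⟩ := hSX hz
        exact ⟨i, I_sub_I0 hi, j, I_sub_I0 hj, hzz⟩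
      · rw [Set.mem_singleton_iff] at hz
        exact ⟨0, zero_mem_I0, 0, zero_mem_I0, hz⟩
      · obtain ⟨j, hj, rfl⟩ := hz
        exact ⟨0, zero_mem_I0, j, I_sub_I0 (hJ hj), rfl⟩
    intro a haI0 b hbI0 c hcI0 hab hc
    rcases hab with (habS | hab00) | ⟨j, hjJ, habj⟩
    · -- s(a,b) ∈ S
      obtain ⟨haI, hbI, hab'⟩ := hSel habS
      rw [mem_I_iff] at haI hbI
      obtain ⟨hfmem, _, _, _⟩ := fstar_facts a haI b hbI hab'
      have hf0 : fstar a b ≠ 0 := by rw [Finset.mem_Icc] at hfmem; omega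
      rcases hc with (hcS | hc00) | ⟨k, hkJ, hck⟩
      · exact fun z hz => hST (hS.2 a (I_sub_I0 ((mem_I_iff a).2 haI)) b
          (I_sub_I0 ((mem_I_iff b).2 hbI)) c hcI0 habS hcS hz)
      · rw [Set.mem_singleton_iff, Sym2.eq_iff] at hc00
        rcases hc00 with ⟨h, _⟩ | ⟨h, _⟩ <;> exact absurd h hf0
      · rw [Sym2.eq_iff] at hck
        rcases hck with ⟨h, _⟩ | ⟨rfl, rfl⟩
        · exact absurd h hf0
        · -- c = 0, fstar a b ∈ J
          rcases hline a b habS with hempty | hsub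
          · exfalso
            have : fstar a b ∈ ({a, b, fstar a b} : Set ℕ) ∩ J := ⟨by simp, hkJ⟩
            rw [hempty] at this
            exact this
          have haJ : a ∈ J := hsub (by simp)
          have hbJ : b ∈ J := hsub (by simp)
          intro z hz
          simp only [P, Set.mem_insert_iff, Set.mem_singleton_iff] at hz
          rcases hz with rfl | rfl | rfl | rfl | rfl | rfl
          · exact hST habS
          · rw [Sym2.eq_swap]; exact hJT b hbJ
          · exact hJT a haJ
          · rw [fstar_zero_right]; exact hST habS
          · rw [fstar_zero_left, Sym2.eq_swap]; exact hST habS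
          · exact hJT _ hkJ
    · -- s(a,b) = s(0,0)
      rw [Set.mem_singleton_iff, Sym2.eq_iff] at hab00
      have hab0 : a = 0 ∧ b = 0 := by tauto
      obtain ⟨rfl, rfl⟩ := hab0
      rw [fstar_zero_left] at hc
      intro z hz
      simp only [P, Set.mem_insert_iff, Set.mem_singleton_iff] at hz
      rcases hz with rfl | rfl | rfl | rfl | rfl | rfl
      · exact h00
      · exact hc
      · rw [Sym2.eq_swap]; exact hc
      · rw [fstar_zero_left]; exact hc
      · rw [fstar_zero_right]; exact hc
      · rw [fstar_zero_left]; rw [Sym2.eq_swap]; exact hc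
    · -- s(a,b) = s(0,j), j ∈ J
      rw [Sym2.eq_iff] at habj
      rcases habj with ⟨rfl, rfl⟩ | ⟨rfl, rfl⟩
      · -- a = 0, b = j
        rw [fstar_zero_left] at hc
        obtain ⟨e1, e2, e3, e4, _⟩ := hB b hjJ c hcI0 hc
        intro z hz
        simp only [P, Set.mem_insert_iff, Set.mem_singleton_iff] at hz
        rcases hz with rfl | rfl | rfl | rfl | rfl | rfl
        · exact e1
        · exact e2
        · rw [Sym2.eq_swap]; exact e3
        · exact e4
        · rw [fstar_zero_right]; exact e2
        · rw [fstar_zero_left, Sym2.eq_swap]; exact e2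
      · -- a = j, b = 0
        rw [fstar_zero_right] at hc
        obtain ⟨e1, e2, e3, e4, e5⟩ := hB a hjJ c hcI0 hc
        intro z hz
        simp only [P, Set.mem_insert_iff, Set.mem_singleton_iff] at hz
        rcases hz with rfl | rfl | rfl | rfl | rfl | rfl
        · rw [Sym2.eq_swap]; exact e1
        · exact e3
        · rw [Sym2.eq_swap]; exact e2
        · rw [fstar_zero_left]; exact e2
        · rw [e5]; exact e4
        · rw [fstar_zero_right, Sym2.eq_swap]; exact e2
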